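/- Let B be a finite skew left brace such that [B : Ann(B)] = p for a prime p. Then Pb(B) = (2p - 1)/p². -/

import Mathlib

/-- A skew left brace structure on a type carrying both an additive and a
multiplicative group structure: the compatibility (skew left distributivity)
`a ∘ (b + c) = (a ∘ b) - a + (a ∘ c)` holds, and the two identities coincide. -/
class SkewBrace (B : Type*) [AddGroup B] [Group B] : Prop where
  compat : ∀ a b c : B, a * (b + c) = a * b + -a + a * c
  zero_eq_one : (0 : B) = 1

section Defs

variable {B : Type*} [AddGroup B] [Group B]

/-- `λ_a(b) = -a + (a ∘ b)`. -/
def lambdaMap (a b : B) : B := -a + a * b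

/-- `a * b := -a + (a ∘ b) - b` (the star product of a skew brace). -/
def starOp (a b : B) : B := -a + a * b + -b

/-- The additive commutator `[a,b]⁺ = a + b - a - b`. -/
def addComB (a b : B) : B := a + b + -a + -b

/-- The multiplicative commutator `[a,b]∘ = a ∘ b ∘ a⁻¹ ∘ b⁻¹`. -/
def mulComB (a b : B) : B := a * b * a⁻¹ * b⁻¹

/-- The brace centralizer `Cb_B(x) = {b | x*b = b*x = [x,b]⁺ = 1}`. -/
def Cb (x : B) : Set B := {b | starOp x b = 0 ∧ starOp b x = 0 ∧ addComB x b = 0}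

/-- The annihilator `Ann(B) = Ker λ ∩ Z(B,+) ∩ Z(B,∘)` as a set. -/
def AnnSet (B : Type*) [AddGroup B] [Group B] : Set B :=
  {a | (∀ b : B, a + b = a * b) ∧ (∀ b : B, a + b = b + a) ∧ (∀ b : B, a * b = b * a)}

/-- A sub-skew brace: a subset closed under both group operations and inverses. -/
def IsSubSkewBrace (H : Set B) : Prop :=
  (0 : B) ∈ H ∧ (∀ a ∈ H, ∀ b ∈ H, a + b ∈ H) ∧ (∀ a ∈ H, -a ∈ H) ∧
    (∀ a ∈ H, ∀ b ∈ H, a * b ∈ H) ∧ (∀ a ∈ H, a⁻¹ ∈ H)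

/-- The commuting probability of a (finite) skew brace. -/
noncomputable def Pb (B : Type*) [AddGroup B] [Group B] : ℚ :=
  (Nat.card {p : B × B //
      starOp p.1 p.2 = 0 ∧ starOp p.2 p.1 = 0 ∧ addComB p.1 p.2 = 0} : ℚ)
    / (Nat.card B : ℚ) ^ 2

/-- The commuting probability of a sub-skew brace `H` of `B`. -/
noncomputable def PbSub (H : Set B) : ℚ :=
  (Nat.card {p : B × B // p.1 ∈ H ∧ p.2 ∈ H ∧
      starOp p.1 p.2 = 0 ∧ starOp p.2 p.1 = 0 ∧ addComB p.1 p.2 = 0} : ℚ)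
    / (Nat.card H : ℚ) ^ 2

end Defs

set_option linter.unusedSectionVars false

section Aux

variable {B : Type*} [AddGroup B] [Group B] [SkewBrace B]

lemma sb_one_eq_zero : (1 : B) = 0 := SkewBrace.zero_eq_one.symm

lemma sb_mul_zero (a : B) : a * (0 : B) = a := by
  rw [SkewBrace.zero_eq_one, mul_one]

lemma sb_zero_mul (a : B) : (0 : B) * a = a := by
  rw [SkewBrace.zero_eq_one, one_mul]

lemma star_eq_zero_iff (a b : B) : starOp a b = 0 ↔ a * b = a + b := by
  unfold starOp
  constructor
  · intro hh
    have h2 := congrArg (fun t => a + (t + b)) hh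
    simpa [add_assoc] using h2
  · intro hh
    simp [hh, add_assoc]

lemma addCom_eq_zero_iff (a b : B) : addComB a b = 0 ↔ a + b = b + a := by
  unfold addComB
  constructor
  · intro hh
    have := congrArg (fun t => t + b + a) hh
    simpa [add_assoc] using this
  · intro hh
    simp [hh, add_assoc]

lemma mem_Cb_iff (x b : B) :
    b ∈ Cb x ↔ x * b = x + b ∧ b * x = b + x ∧ x + b = b + x := by
  unfold Cb
  simp only [Set.mem_setOf_eq, star_eq_zero_iff, addCom_eq_zero_iff]

lemma lam_apply (a b : B) : a * b = a + lambdaMap a b := by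
  simp [lambdaMap, add_assoc]

lemma lam_add (a b c : B) : lambdaMap a (b + c) = lambdaMap a b + lambdaMap a c := by
  simp [lambdaMap, SkewBrace.compat a b c, add_assoc]

lemma lam_zero (a : B) : lambdaMap a (0 : B) = 0 := by
  simp [lambdaMap, sb_mul_zero]

lemma lam_neg (a b : B) : lambdaMap a (-b) = -lambdaMap a b := by
  have h := lam_add a b (-b)
  rw [add_neg_cancel, lam_zero] at h
  exact (neg_eq_of_add_eq_zero_right h.symm).symm

lemma sb_mul_neg (a b : B) : a * (-b) = a + -(a * b) + a := by
  have h := lam_neg a b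
  rw [lam_apply a (-b), h, lambdaMap]
  rw [neg_add_rev]
  simp [add_assoc]

lemma lam_mul (a b c : B) : lambdaMap (a * b) c = lambdaMap a (lambdaMap b c) := by
  unfold lambdaMap
  rw [SkewBrace.compat a (-b) (b * c), sb_mul_neg, ← mul_assoc]
  simp [add_assoc]

lemma lam_one (b : B) : lambdaMap (1 : B) b = b := by
  simp [lambdaMap, sb_one_eq_zero, sb_zero_mul]

lemma lam_inv (a b : B) : lambdaMap a⁻¹ (lambdaMap a b) = b := by
  rw [← lam_mul, inv_mul_cancel, lam_one]

lemma inv_eq_neg_lam (b : B) : b⁻¹ = -(lambdaMap b⁻¹ b) := by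
  have h1 : lambdaMap b b⁻¹ = -b := by
    simp [lambdaMap, mul_inv_cancel, sb_one_eq_zero]
  have h2 := lam_inv b b⁻¹
  rw [h1, lam_neg] at h2
  exact h2.symm

end Aux

section Subgaps

variable {B : Type*} [AddGroup B] [Group B] [SkewBrace B]

/-- The annihilator as a subgroup of the multiplicative group. -/
def AnnSub (B : Type*) [AddGroup B] [Group B] [SkewBrace B] : Subgroup B where
  carrier := AnnSet B
  one_mem' := by
    refine ⟨?_, ?_, ?_⟩ <;> intro b <;>
      simp [sb_one_eq_zero, sb_zero_mul, sb_mul_zero]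
  mul_mem' := by
    rintro a a' ⟨ha1, ha2, ha3⟩ ⟨hb1, hb2, hb3⟩
    have hmul : a * a' = a + a' := (ha1 a').symm
    refine ⟨?_, ?_, ?_⟩ <;> intro b
    · calc a * a' + b = a + (a' + b) := by rw [hmul, add_assoc]
        _ = a * (a' * b) := by rw [hb1, ha1]
        _ = a * a' * b := by rw [mul_assoc]
    · rw [hmul, add_assoc, hb2 b, ← add_assoc, ha2 b, add_assoc]
    · rw [mul_assoc, hb3 b, ← mul_assoc, ha3 b, mul_assoc]
  inv_mem' := by
    rintro a ⟨ha1, ha2, ha3⟩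
    have hainv : a⁻¹ = -a := by
      have : a * (-a) = 1 := by rw [← ha1 (-a), add_neg_cancel, sb_one_eq_zero]
      exact (eq_inv_of_mul_eq_one_right this).symm
    have hmulinv : ∀ b : B, a⁻¹ * b = -a + b := by
      intro b
      have h1 : a * (a⁻¹ * b) = b := by rw [← mul_assoc, mul_inv_cancel, one_mul]
      have h2 : a + (a⁻¹ * b) = b := by rw [ha1]; exact h1
      have := congrArg (fun t => -a + t) h2
      simpa [add_assoc] using this
    have hneg : ∀ b : B, -a + b = b + -a := by
      intro b
      have h0 := congrArg (fun t : B => -t) (ha2 (-b))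
      simpa [neg_add_rev] using h0.symm
    refine ⟨?_, ?_, ?_⟩ <;> intro b
    · rw [hmulinv b, hainv]
    · rw [hainv]; exact hneg b
    · rw [inv_mul_eq_iff_eq_mul, ← mul_assoc, ha3 b, mul_assoc, mul_inv_cancel, mul_one]

/-- The brace centralizer as a subgroup of the multiplicative group. -/
def CbSub (x : B) : Subgroup B where
  carrier := Cb x
  one_mem' := by
    rw [mem_Cb_iff, sb_one_eq_zero]
    simp [sb_mul_zero, sb_zero_mul]
  mul_mem' := by
    intro b c hb hc
    rw [mem_Cb_iff] at hb hc ⊢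
    obtain ⟨hb1, hb2, hb3⟩ := hb
    obtain ⟨hc1, hc2, hc3⟩ := hc
    -- λ_x b = b etc.
    have lxb : lambdaMap x b = b := by
      have := lam_apply x b; rw [hb1] at this; exact (add_left_cancel this.symm)
    have lbx : lambdaMap b x = x := by
      have := lam_apply b x; rw [hb2] at this; exact (add_left_cancel this.symm)
    have lxc : lambdaMap x c = c := by
      have := lam_apply x c; rw [hc1] at this; exact (add_left_cancel this.symm)
    have lcx : lambdaMap c x = x := by
      have := lam_apply c x; rw [hc2] at this; exact (add_left_cancel this.symm)
    have hcomm : x * b = b * x := by rw [hb1, hb2, hb3]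
    -- x + λ_b c = λ_b c + x
    have hxl : x + lambdaMap b c = lambdaMap b c + x := by
      have e1 : lambdaMap b (x + c) = x + lambdaMap b c := by rw [lam_add, lbx]
      have e2 : lambdaMap b (c + x) = lambdaMap b c + x := by rw [lam_add, lbx]
      rw [← e1, ← e2, hc3.symm]
    -- additive commutation
    have hadd : x + b * c = b * c + x := by
      rw [lam_apply b c, ← add_assoc, hb3, add_assoc, hxl, add_assoc]
    -- x * (b*c) = x + b*c
    have h1 : x * (b * c) = x + b * c := by
      rw [lam_apply x (b*c)]
      congr 1
      calc lambdaMap x (b * c) = lambdaMap x (b + lambdaMap b c) := by rw [← lam_apply]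
        _ = lambdaMap x b + lambdaMap x (lambdaMap b c) := by rw [lam_add]
        _ = b + lambdaMap (x * b) c := by rw [lxb, ← lam_mul]
        _ = b + lambdaMap (b * x) c := by rw [hcomm]
        _ = b + lambdaMap b (lambdaMap x c) := by rw [lam_mul]
        _ = b + lambdaMap b c := by rw [lxc]
        _ = b * c := by rw [← lam_apply]
    have h2 : (b * c) * x = b * c + x := by
      rw [lam_apply (b*c) x, lam_mul, lcx, lbx]
    exact ⟨h1, h2, hadd⟩
  inv_mem' := by
    intro b hb
    rw [mem_Cb_iff] at hb ⊢
    obtain ⟨hb1, hb2, hb3⟩ := hb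
    have lxb : lambdaMap x b = b := by
      have := lam_apply x b; rw [hb1] at this; exact (add_left_cancel this.symm)
    have lbx : lambdaMap b x = x := by
      have := lam_apply b x; rw [hb2] at this; exact (add_left_cancel this.symm)
    have hcomm : x * b = b * x := by rw [hb1, hb2, hb3]
    have hcomm' : x * b⁻¹ = b⁻¹ * x := (Commute.inv_right (hcomm : Commute x b) : _)
    have linvx : lambdaMap b⁻¹ x = x := by
      have h5 := lam_inv b x
      rw [lbx] at h5; exact h5
    -- λ_x b⁻¹ = b⁻¹
    have lxinv : lambdaMap x b⁻¹ = b⁻¹ := by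
      conv_lhs => rw [inv_eq_neg_lam]
      rw [lam_neg, ← lam_mul, hcomm', lam_mul, lxb, ← inv_eq_neg_lam]
    -- x + b⁻¹ = b⁻¹ + x
    have haddinv : x + b⁻¹ = b⁻¹ + x := by
      have e1 : lambdaMap b⁻¹ (x + b) = x + lambdaMap b⁻¹ b := by rw [lam_add, linvx]
      have e2 : lambdaMap b⁻¹ (b + x) = lambdaMap b⁻¹ b + x := by rw [lam_add, linvx]
      have e3 : x + lambdaMap b⁻¹ b = lambdaMap b⁻¹ b + x := by rw [← e1, ← e2, hb3]
      have := congrArg (fun t => -t) e3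
      simp only [neg_add_rev] at this
      rw [inv_eq_neg_lam]
      -- this : -(λ b⁻¹ b) + -x = -x + -(λ b⁻¹ b)  (after neg_add_rev)
      -- we need x + -(λ b⁻¹ b) = -(λ b⁻¹ b) + x
      have e4 := congrArg (fun t => x + t + x) this
      simp only [add_assoc] at e4 ⊢
      simpa [add_assoc] using e4
    refine ⟨?_, ?_, haddinv⟩
    · rw [lam_apply, lxinv]
    · rw [lam_apply, linvx]

lemma ann_mem_Cb_right (x a : B) (ha : a ∈ AnnSet B) : a ∈ Cb x := by
  obtain ⟨h1, h2, h3⟩ := ha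
  rw [mem_Cb_iff]
  refine ⟨?_, ?_, (h2 x).symm⟩
  · rw [← h3 x, ← h1 x, h2 x]
  · rw [← h1 x]
  
lemma Cb_eq_univ_of_ann (x : B) (hx : x ∈ AnnSet B) : Cb x = Set.univ := by
  ext b
  simp only [Set.mem_univ, iff_true]
  obtain ⟨h1, h2, h3⟩ := hx
  rw [mem_Cb_iff]
  exact ⟨(h1 b).symm, by rw [← h3 b, ← h1 b, h2 b], h2 b⟩

lemma mem_ann_of_Cb_univ (x : B) (hx : Cb x = Set.univ) : x ∈ AnnSet B := by
  have hall : ∀ b : B, x * b = x + b ∧ b * x = b + x ∧ x + b = b + x := by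
    intro b
    have : b ∈ Cb x := hx ▸ Set.mem_univ b
    exact (mem_Cb_iff x b).mp this
  exact ⟨fun b => ((hall b).1).symm, fun b => (hall b).2.2,
    fun b => by rw [(hall b).1, (hall b).2.2, ← (hall b).2.1]⟩

end Subgaps

/-- If `[B : Ann(B)] = p` is prime, then `Pb(B) = (2p-1)/p²`. -/
theorem stmt8 {B : Type*} [AddGroup B] [Group B] [SkewBrace B] [Finite B]
    (p : ℕ) (hp : p.Prime) (h : Nat.card B = p * Nat.card (AnnSet B)) :
    Pb B = (2 * (p : ℚ) - 1) / (p : ℚ) ^ 2 := by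
  classical
  set A : Set B := AnnSet B with hA
  set n : ℕ := Nat.card A with hn
  haveI : Nonempty A := ⟨⟨(1 : B), (AnnSub B).one_mem⟩⟩
  have hn0 : 0 < n := Nat.card_pos
  -- index of AnnSub is p
  have hidx : (AnnSub B).index = p := by
    have h2 := (AnnSub B).index_mul_card
    rw [h] at h2
    exact Nat.eq_of_mul_eq_mul_right hn0 h2
  -- Cb x = A for x ∉ A
  have hCb : ∀ x : B, x ∉ A → Cb x = A := by
    intro x hx
    have hle : AnnSub B ≤ CbSub x := fun a ha => ann_mem_Cb_right x a ha
    have hne : CbSub x ≠ ⊤ := by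
      intro htop
      exact hx (mem_ann_of_Cb_univ x (by rw [show Cb x = ((CbSub x : Subgroup B) : Set B) from rfl, htop]; rfl))
    have hrel := Subgroup.relIndex_mul_index hle
    rw [hidx] at hrel
    have hKne1 : (CbSub x).index ≠ 1 := fun h1 => hne (Subgroup.index_eq_one.mp h1)
    have hKdvd : (CbSub x).index ∣ p := Dvd.intro_left _ hrel
    have hKp : (CbSub x).index = p :=
      (hp.eq_one_or_self_of_dvd _ hKdvd).resolve_left hKne1
    have hrel1 : (AnnSub B).relIndex (CbSub x) = 1 := by
      rw [hKp] at hrel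
      exact Nat.eq_of_mul_eq_mul_right hp.pos (by rw [hrel, one_mul])
    have heq : CbSub x = AnnSub B :=
      le_antisymm (Subgroup.relIndex_eq_one.mp hrel1) hle
    exact congrArg (fun H : Subgroup B => (H : Set B)) heq
  -- the set of commuting pairs
  have hset : {q : B × B | starOp q.1 q.2 = 0 ∧ starOp q.2 q.1 = 0 ∧ addComB q.1 q.2 = 0}
      = (A ×ˢ (Set.univ : Set B)) ∪ ((Set.univ \ A) ×ˢ A) := by
    ext ⟨a, b⟩
    simp only [Set.mem_setOf_eq, Set.mem_union, Set.mem_prod, Set.mem_univ, Set.mem_diff,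
      true_and, and_true]
    constructor
    · intro hcond
      by_cases ha : a ∈ A
      · exact Or.inl ha
      · refine Or.inr ⟨ha, ?_⟩
        have hb : b ∈ Cb a := hcond
        rw [hCb a ha] at hb
        exact hb
    · rintro (ha | ⟨-, hb⟩)
      · have hb : b ∈ Cb a := by rw [Cb_eq_univ_of_ann a ha]; trivial
        exact hb
      · exact ann_mem_Cb_right a b hb
  -- cardinalities
  have e1 : Nat.card ↥(A ×ˢ (Set.univ : Set B)) = n * (p * n) := by
    rw [Nat.card_congr (Equiv.Set.prod _ _), Nat.card_prod]
    congr 1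
    rw [Nat.card_coe_set_eq, Set.ncard_univ, h]
  have e2 : Nat.card ↥((Set.univ \ A) ×ˢ A) = (p * n - n) * n := by
    rw [Nat.card_congr (Equiv.Set.prod _ _), Nat.card_prod]
    congr 1
    rw [Nat.card_coe_set_eq, Set.ncard_diff (Set.subset_univ A), Set.ncard_univ, h,
      ← Nat.card_coe_set_eq]
  have hdisj : Disjoint (A ×ˢ (Set.univ : Set B)) ((Set.univ \ A) ×ˢ A) := by
    rw [Set.disjoint_left]
    rintro ⟨a, b⟩ ⟨ha, -⟩ ⟨⟨-, ha'⟩, -⟩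
    exact ha' ha
  have hcard : Nat.card {q : B × B //
      starOp q.1 q.2 = 0 ∧ starOp q.2 q.1 = 0 ∧ addComB q.1 q.2 = 0}
      = n * (p * n) + (p * n - n) * n := by
    have : Nat.card {q : B × B //
        starOp q.1 q.2 = 0 ∧ starOp q.2 q.1 = 0 ∧ addComB q.1 q.2 = 0}
        = Nat.card ↥((A ×ˢ (Set.univ : Set B)) ∪ ((Set.univ \ A) ×ˢ A)) :=
      Nat.card_congr (Equiv.setCongr hset)
    rw [this, Nat.card_coe_set_eq, Set.ncard_union_eq hdisj,
      ← Nat.card_coe_set_eq, ← Nat.card_coe_set_eq, e1, e2]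
  -- final computation
  have hple : n ≤ p * n := Nat.le_mul_of_pos_left n hp.pos
  have hp0 : (p : ℚ) ≠ 0 := Nat.cast_ne_zero.mpr hp.ne_zero
  have hn0' : (n : ℚ) ≠ 0 := Nat.cast_ne_zero.mpr hn0.ne'
  rw [Pb, hcard, h]
  push_cast [hple]
  field_simp
  ring
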